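/- For every 1 ≤ j ≤ n−1 and every signed permutation w of ±[n], h_{j, [j+1]}(w) = h_{−(j+1), [−j]}(w); that is, the hopping operators h_{j,[j+1]} and h_{−(j+1),[−j]} coincide. -/

import Mathlib

open Equiv

/-- The key of `a : ℤ` in the total order `1 < 2 < ⋯ < n < -n < ⋯ < -2 < -1` on `±[n]`:
elements of `±[n]` get the keys `1, …, 2n` (in order); anything else gets key `2n+1`. -/
def dkey (n : ℕ) (a : ℤ) : ℤ :=
  if 1 ≤ a ∧ a ≤ (n : ℤ) then a
  else if -(n : ℤ) ≤ a ∧ a ≤ -1 then 2 * n + 1 + a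
  else 2 * n + 1

/-- `a < b` in the total order `1 < 2 < ⋯ < n < -n < ⋯ < -2 < -1` on `±[n]`. -/
def dlt (n : ℕ) (a b : ℤ) : Prop := dkey n a < dkey n b

instance (n : ℕ) (a b : ℤ) : Decidable (dlt n a b) :=
  inferInstanceAs (Decidable (dkey n a < dkey n b))

/-- `a` is an element of `±[n] = {1,…,n} ∪ {-1,…,-n}`. -/
def inPM (n : ℕ) (a : ℤ) : Prop := a ≠ 0 ∧ |a| ≤ (n : ℤ)

instance (n : ℕ) (a : ℤ) : Decidable (inPM n a) :=
  inferInstanceAs (Decidable (a ≠ 0 ∧ |a| ≤ (n : ℤ)))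

/-- The element of `±[n]` whose key is `k` (for `1 ≤ k ≤ 2n`). -/
def ofKey (n : ℕ) (k : ℤ) : ℤ := if k ≤ (n : ℤ) then k else k - (2 * n + 1)

/-- A signed permutation of `±[n]`, viewed as a permutation of `ℤ`:
it commutes with negation and fixes everything outside `±[n]`. -/
def IsSignedPerm (n : ℕ) (w : Perm ℤ) : Prop :=
  (∀ a : ℤ, w (-a) = -(w a)) ∧ ∀ a : ℤ, (n : ℤ) < |a| → w a = a

/-- An even signed permutation of `±[n]`, i.e. an element of the group `D_n`. -/
def IsEvenSignedPerm (n : ℕ) (w : Perm ℤ) : Prop :=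
  IsSignedPerm n w ∧ Even ((Finset.Icc (1 : ℤ) (n : ℤ)).filter fun i => w i < 0).card

/-- The simple generators `s_1, …, s_n` of `D_n`:  for `1 ≤ i ≤ n-1`, `s_i` exchanges the
values `i ↔ i+1` and `-i ↔ -(i+1)`;  `s_n` exchanges the values `n-1 ↔ -n` and `n ↔ -(n-1)`. -/
def sgen (n i : ℕ) : Perm ℤ :=
  if i = n then Equiv.swap ((n : ℤ) - 1) (-(n : ℤ)) * Equiv.swap (n : ℤ) (-((n : ℤ) - 1))
  else Equiv.swap (i : ℤ) ((i : ℤ) + 1) * Equiv.swap (-(i : ℤ)) (-((i : ℤ) + 1))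

/-- The product `s_{l₁} s_{l₂} ⋯ s_{l_k}` of the word `l = [l₁, …, l_k]`. -/
def wordProd (n : ℕ) (l : List ℕ) : Perm ℤ := (l.map (sgen n)).prod

/-- The Coxeter length of `w ∈ D_n`: the least length of a word in `s_1, …, s_n` whose
product is `w`. -/
noncomputable def DLength (n : ℕ) (w : Perm ℤ) : ℕ :=
  sInf {k | ∃ l : List ℕ, (∀ i ∈ l, 1 ≤ i ∧ i ≤ n) ∧ l.length = k ∧ wordProd n l = w}

/-- `dem` is the Demazure product of the Coxeter group `D_n`: the (unique) associative
product on `D_n`, with identity `id`, such that for each simple generator `s` and `u ∈ D_n`,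
`s ⋆ u = s·u` if `ℓ(s·u) > ℓ(u)`, and `s ⋆ u = u` if `ℓ(s·u) < ℓ(u)`. -/
def IsDemazure (n : ℕ) (dem : Perm ℤ → Perm ℤ → Perm ℤ) : Prop :=
  (∀ u v, IsEvenSignedPerm n u → IsEvenSignedPerm n v → IsEvenSignedPerm n (dem u v)) ∧
  (∀ u v w, IsEvenSignedPerm n u → IsEvenSignedPerm n v → IsEvenSignedPerm n w →
      dem (dem u v) w = dem u (dem v w)) ∧
  (∀ u, IsEvenSignedPerm n u → dem 1 u = u ∧ dem u 1 = u) ∧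
  (∀ i, 1 ≤ i → i ≤ n → ∀ u, IsEvenSignedPerm n u →
      (DLength n u < DLength n (sgen n i * u) → dem (sgen n i) u = sgen n i * u) ∧
      (DLength n (sgen n i * u) < DLength n u → dem (sgen n i) u = u))

/-- The swap performed in one step of the hopping procedure: exchange the values `t ↔ q`
and simultaneously `-t ↔ -q` (unless `t = -q`). -/
def hswap (t q : ℤ) : Perm ℤ :=
  if t = -q then Equiv.swap t q else Equiv.swap t q * Equiv.swap (-t) (-q)

/-- `q` is eligible for hopping `t` in `w`: `q ∈ ±[n]`, `q > t` in the order on `±[n]`,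
and `q` occurs strictly to the right of `t` in the unfolding of `w`. -/
def HopStep (n : ℕ) (w : Perm ℤ) (t q : ℤ) : Prop :=
  inPM n q ∧ dlt n t q ∧ dkey n (w⁻¹ t) < dkey n (w⁻¹ q) ∧ dkey n (w⁻¹ q) ≤ 2 * n

instance (n : ℕ) (w : Perm ℤ) (t q : ℤ) : Decidable (HopStep n w t q) :=
  inferInstanceAs (Decidable
    (inPM n q ∧ dlt n t q ∧ dkey n (w⁻¹ t) < dkey n (w⁻¹ q) ∧ dkey n (w⁻¹ q) ≤ 2 * n))

theorem hop_measure (n : ℕ) (w : Perm ℤ) (t q : ℤ) (h : HopStep n w t q) :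
    (2 * (n : ℤ) + 1 - dkey n ((hswap t q * w)⁻¹ t)).toNat
      < (2 * (n : ℤ) + 1 - dkey n (w⁻¹ t)).toNat := by
  obtain ⟨⟨hq0, _⟩, _, hlt, hle⟩ := h
  have key : (hswap t q * w)⁻¹ t = w⁻¹ q := by
    have hs : (hswap t q)⁻¹ t = q := by
      unfold hswap
      split_ifs with he
      · subst he
        simp [Equiv.swap_inv, Equiv.swap_apply_left]
      · have h1 : q ≠ -t := fun hc => he (by omega)
        have h2 : q ≠ -q := fun hc => hq0 (by omega)
        simp [mul_inv_rev, Equiv.swap_inv, Equiv.Perm.mul_apply, Equiv.swap_apply_left,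
          Equiv.swap_apply_of_ne_of_ne h1 h2]
    rw [mul_inv_rev, Equiv.Perm.mul_apply, hs]
  rw [key]
  omega

/-- The hopping operator `h_{t,L}`: repeatedly pick the element `q` of `L`, occurring
latest in `L`, among those greater than `t` occurring strictly to the right of `t` in
the unfolding of `w`; swap the values `t ↔ q` (and `-t ↔ -q`, unless `t = -q`); stop
when no such `q` exists. -/
def hop (n : ℕ) (t : ℤ) (L : List ℤ) (w : Perm ℤ) : Perm ℤ :=
  match h : L.reverse.find? (fun q => decide (HopStep n w t q)) with
  | none => w
  | some q => hop n t L (hswap t q * w)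
termination_by (2 * (n : ℤ) + 1 - dkey n (w⁻¹ t)).toNat
decreasing_by
  have hq := List.find?_some h
  simp only [decide_eq_true_eq] at hq
  exact hop_measure n w t q hq

/-- The unfolding `[w(1), …, w(n), -w(n), …, -w(1)]` of a signed permutation `w`. -/
def unfoldList (n : ℕ) (w : Perm ℤ) : List ℤ :=
  (List.range (2 * n)).map fun p => w (ofKey n ((p : ℤ) + 1))

/-- `w ↖ t`: the ordered list of entries of the unfolding of `w` occurring strictly to the
left of the value `t` and lying strictly between `t` and `-t` in the order on `±[n]`. -/
def liftD (n : ℕ) (w : Perm ℤ) (t : ℤ) : List ℤ :=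
  ((unfoldList n w).take (dkey n (w⁻¹ t) - 1).toNat).filter
    fun a => decide (dlt n t a ∧ dlt n a (-t))

/-- `L ∼ₜ L'` : the hopping operators `h_{t,L}` and `h_{t,L'}` agree on all of `D_n`. -/
def HopEquiv (n : ℕ) (t : ℤ) (L L' : List ℤ) : Prop :=
  ∀ u : Perm ℤ, IsEvenSignedPerm n u → hop n t L u = hop n t L' u

/-- The list `[a, a+1, …, b]` (as integers). -/
def listUp (a b : ℕ) : List ℤ := (List.range (b + 1 - a)).map fun k => (a : ℤ) + k

/-- The list `[-b, -(b-1), …, -a]` (as integers). -/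
def listNegUp (a b : ℕ) : List ℤ := (List.range (b + 1 - a)).map fun k => -(b : ℤ) + k

/-- For `1 ≤ i ≤ n-2` : `Q` is one of the minimal coset representatives
(form 0: `id`; form 1: `s_i ⋯ s_j`; form 2: `s_i ⋯ s_{n-2} s_n s_{n-1} ⋯ s_j`;
form 3: `s_i ⋯ s_{n-2} s_n`). -/
def QForm (n i : ℕ) (Q : Perm ℤ) : Prop :=
  Q = 1 ∨
  (∃ j, i ≤ j ∧ j ≤ n - 1 ∧ Q = wordProd n (List.range' i (j + 1 - i))) ∨
  (∃ j, i ≤ j ∧ j ≤ n - 1 ∧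
    Q = wordProd n (List.range' i (n - 1 - i) ++ [n] ++ (List.range' j (n - j)).reverse)) ∨
  Q = wordProd n (List.range' i (n - 1 - i) ++ [n])

/-- `Q` is one of the four elements `id`, `s_{n-1}`, `s_n s_{n-1}`, `s_n` of
`W_{{s_{n-1}, s_n}}`. -/
def QFormTop (n : ℕ) (Q : Perm ℤ) : Prop :=
  Q = 1 ∨ Q = sgen n (n - 1) ∨ Q = sgen n n * sgen n (n - 1) ∨ Q = sgen n n

/-- For `1 ≤ i ≤ n-2`: `(Q, L)` is a factor of a parabolic factorization together with
its associated list `L_i`. -/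
def QList (n i : ℕ) (Q : Perm ℤ) (L : List ℤ) : Prop :=
  (Q = 1 ∧ L = []) ∨
  (∃ j, i ≤ j ∧ j ≤ n - 1 ∧ Q = wordProd n (List.range' i (j + 1 - i)) ∧
    L = listUp (i + 1) (j + 1)) ∨
  (∃ j, i ≤ j ∧ j ≤ n - 1 ∧
    Q = wordProd n (List.range' i (n - 1 - i) ++ [n] ++ (List.range' j (n - j)).reverse) ∧
    L = listUp (i + 1) n ++ listNegUp (j + 1) n) ∨
  (Q = wordProd n (List.range' i (n - 1 - i) ++ [n]) ∧
    L = listUp (i + 1) (n - 1) ++ [-(n : ℤ)])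

/-- `(Q, L)` is the top factor `Q_{n-1}` of a parabolic factorization together with its
associated list `L_{n-1}`. -/
def QListTop (n : ℕ) (Q : Perm ℤ) (L : List ℤ) : Prop :=
  (Q = 1 ∧ L = []) ∨ (Q = sgen n (n - 1) ∧ L = [(n : ℤ)]) ∨
  (Q = sgen n n * sgen n (n - 1) ∧ L = [(n : ℤ), -(n : ℤ)]) ∨
  (Q = sgen n n ∧ L = [-(n : ℤ)])

/-- The partial product `Q_{n-1} Q_{n-2} ⋯ Q_k` of a parabolic factorization. -/
def prodQ (n : ℕ) (Q : ℕ → Perm ℤ) (k : ℕ) : Perm ℤ :=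
  (((List.range' k (n - k)).reverse).map Q).prod

/-- The letterwise extended Demazure action of the generator `s_i` (for `1 ≤ i ≤ n-1`) on an
arbitrary signed permutation: `s_i ⋆ u = s_i·u` if the value `i` occurs strictly to the left
of the value `i+1` in the unfolding of `u`, and `u` otherwise. -/
def demStep (n i : ℕ) (u : Perm ℤ) : Perm ℤ :=
  if dkey n (u⁻¹ (i : ℤ)) < dkey n (u⁻¹ ((i : ℤ) + 1)) then sgen n i * u else u

/-- The letterwise extended Demazure action of a word:
`(s_{a₁} ⋯ s_{a_k}) ⋆ u = s_{a₁} ⋆ (s_{a₂} ⋆ (⋯ (s_{a_k} ⋆ u)))`. -/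
def demWord (n : ℕ) (l : List ℕ) (u : Perm ℤ) : Perm ℤ := l.foldr (demStep n) u

/-- A member of the symmetric group on `±[n]`, viewed as a permutation of `ℤ`:
it fixes `0` and everything of absolute value `> n`. -/
def IsPermPM (n : ℕ) (w : Perm ℤ) : Prop := ∀ a : ℤ, a = 0 ∨ (n : ℤ) < |a| → w a = a

/-- The simple generators of the symmetric group on `±[n]` (type `A_{2n-1}`):
`agen n k` (for `1 ≤ k ≤ 2n-1`) transposes the order-adjacent elements of `±[n]`
with keys `k` and `k+1`. -/
def agen (n k : ℕ) : Perm ℤ := Equiv.swap (ofKey n (k : ℤ)) (ofKey n ((k : ℤ) + 1))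

/-- The Coxeter length of an element of the symmetric group on `±[n]`. -/
noncomputable def ALength (n : ℕ) (w : Perm ℤ) : ℕ :=
  sInf {k | ∃ l : List ℕ, (∀ i ∈ l, 1 ≤ i ∧ i ≤ 2 * n - 1) ∧ l.length = k ∧
    (l.map (agen n)).prod = w}

/-- `dem` is the Demazure product of the symmetric group on `±[n]`, viewed as a Coxeter
group of type `A_{2n-1}` with simple generators the transpositions of order-adjacent
elements of `±[n]`. -/
def IsDemazureA (n : ℕ) (dem : Perm ℤ → Perm ℤ → Perm ℤ) : Prop :=
  (∀ u v, IsPermPM n u → IsPermPM n v → IsPermPM n (dem u v)) ∧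
  (∀ u v w, IsPermPM n u → IsPermPM n v → IsPermPM n w →
      dem (dem u v) w = dem u (dem v w)) ∧
  (∀ u, IsPermPM n u → dem 1 u = u ∧ dem u 1 = u) ∧
  (∀ k, 1 ≤ k → k ≤ 2 * n - 1 → ∀ u, IsPermPM n u →
      (ALength n u < ALength n (agen n k * u) → dem (agen n k) u = agen n k * u) ∧
      (ALength n (agen n k * u) < ALength n u → dem (agen n k) u = u))

/-! With a one-entry list `[q]` the value `t` hops at most once: the exchange puts `t` where
`q` was and `q` where `t` was, so afterwards `q` is no longer to the right of `t`. For a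
signed permutation, negation reverses both the order on `±[n]` and the unfolding, so `t` may
hop over `q` exactly when `-q` may hop over `-t`, and both hops perform the same exchange
`hswap t q = hswap (-q) (-t)`. -/

lemma one_le_dkey (n : ℕ) (a : ℤ) : 1 ≤ dkey n a := by
  unfold dkey; split_ifs <;> omega

section SignedOrder

variable {n : ℕ} {a : ℤ}

lemma inPM_neg_iff : inPM n (-a) ↔ inPM n a := by
  simp only [inPM, neg_ne_zero, abs_neg]

lemma dkey_of_not_inPM (h : ¬ inPM n a) : dkey n a = 2 * n + 1 := by
  simp only [inPM, abs_le, not_and_or, not_le, ne_eq, not_not] at h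
  unfold dkey; split_ifs <;> omega

lemma dkey_le_of_inPM (h : inPM n a) : dkey n a ≤ 2 * n := by
  obtain ⟨h0, h1⟩ := h
  rw [abs_le] at h1
  unfold dkey; split_ifs <;> omega

lemma dkey_neg_of_inPM (h : inPM n a) : dkey n (-a) = 2 * n + 1 - dkey n a := by
  obtain ⟨h0, h1⟩ := h
  rw [abs_le] at h1
  unfold dkey; split_ifs <;> omega

end SignedOrder

namespace IsSignedPerm

variable {n : ℕ} {w : Perm ℤ}

lemma inv_apply_neg (hw : IsSignedPerm n w) (a : ℤ) : w⁻¹ (-a) = -(w⁻¹ a) := by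
  rw [Perm.inv_eq_iff_eq, hw.1]
  simp only [Perm.coe_inv, apply_symm_apply]

lemma apply_eq_of_not_inPM (hw : IsSignedPerm n w) {a : ℤ} (ha : ¬ inPM n a) : w a = a := by
  simp only [inPM, not_and_or, ne_eq, not_not, not_le] at ha
  rcases ha with rfl | ha
  · linarith [neg_zero (G := ℤ) ▸ hw.1 0]
  · exact hw.2 a ha

lemma inPM_inv_apply_iff (hw : IsSignedPerm n w) (a : ℤ) : inPM n (w⁻¹ a) ↔ inPM n a := by
  by_cases ha : inPM n a
  · refine iff_of_true (not_not.mp fun h => ?_) ha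
    have hfix := hw.apply_eq_of_not_inPM h
    simp only [Perm.coe_inv, apply_symm_apply] at hfix
    exact h (hfix ▸ ha)
  · rw [(Perm.inv_eq_iff_eq.mpr (hw.apply_eq_of_not_inPM ha).symm)]

end IsSignedPerm

section Hopping

variable {n : ℕ} {t q : ℤ} {w : Perm ℤ}

lemma hswap_inv_apply_left (hq : q ≠ 0) : (hswap t q)⁻¹ t = q := by
  unfold hswap
  split_ifs with h
  · simp only [swap_inv, swap_apply_left]
  · rw [mul_inv_rev, Perm.mul_apply, swap_inv, swap_inv, swap_apply_left,
      swap_apply_of_ne_of_ne (by omega) (by omega)]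

lemma hswap_inv_apply_right (ht : t ≠ 0) : (hswap t q)⁻¹ q = t := by
  unfold hswap
  split_ifs with h
  · simp only [swap_inv, swap_apply_right]
  · rw [mul_inv_rev, Perm.mul_apply, swap_inv, swap_inv, swap_apply_right,
      swap_apply_of_ne_of_ne (by omega) (by omega)]

lemma hswap_neg_neg (ht : t ≠ 0) (hq : q ≠ 0) : hswap (-q) (-t) = hswap t q := by
  unfold hswap
  by_cases h : t = -q
  · subst h
    simp only [neg_neg, if_true, swap_comm]
  · rw [if_neg (by omega), if_neg h]
    ext a
    simp only [Perm.mul_apply, swap_apply_def]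
    split_ifs <;> omega

lemma HopStep.inPM_left (h : HopStep n w t q) : inPM n t := by
  by_contra ht
  have := dkey_le_of_inPM h.1
  have := h.2.1
  rw [dlt, dkey_of_not_inPM ht] at this
  omega

lemma hopStep_neg_neg_iff (hw : IsSignedPerm n w) :
    HopStep n w (-q) (-t) ↔ HopStep n w t q := by
  suffices key : ∀ t q : ℤ, HopStep n w t q → HopStep n w (-q) (-t) by
    exact ⟨fun h => by simpa only [neg_neg] using key _ _ h, key t q⟩
  intro t q h
  have ht := h.inPM_left
  have hq := h.1
  have ht' := (hw.inPM_inv_apply_iff t).mpr ht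
  have hq' := (hw.inPM_inv_apply_iff q).mpr hq
  obtain ⟨-, hlt, hpos, -⟩ := h
  refine ⟨inPM_neg_iff.mpr ht, ?_, ?_, ?_⟩
  · rw [dlt] at hlt ⊢
    rw [dkey_neg_of_inPM ht, dkey_neg_of_inPM hq]
    omega
  · rw [hw.inv_apply_neg, hw.inv_apply_neg, dkey_neg_of_inPM ht', dkey_neg_of_inPM hq']
    omega
  · rw [hw.inv_apply_neg, dkey_neg_of_inPM ht']
    linarith [one_le_dkey n (w⁻¹ t)]

lemma hop_of_find?_eq_none {L : List ℤ}
    (h : L.reverse.find? (fun r => decide (HopStep n w t r)) = none) : hop n t L w = w := by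
  rw [hop]; split <;> simp_all

lemma hop_of_find?_eq_some {L : List ℤ}
    (h : L.reverse.find? (fun r => decide (HopStep n w t r)) = some q) :
    hop n t L w = hop n t L (hswap t q * w) := by
  rw [hop]; split <;> simp_all

lemma hop_singleton (n : ℕ) (t q : ℤ) (w : Perm ℤ) :
    hop n t [q] w = if HopStep n w t q then hswap t q * w else w := by
  split_ifs with h
  · have hstop : ¬ HopStep n (hswap t q * w) t q := fun h' => by
      have := h'.2.2.1
      rw [mul_inv_rev, Perm.mul_apply, Perm.mul_apply, hswap_inv_apply_left h.1.1,
        hswap_inv_apply_right h.inPM_left.1] at this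
      linarith [h.2.2.1]
    rw [hop_of_find?_eq_some (q := q) (by simp [h]), hop_of_find?_eq_none (by simp [hstop])]
  · exact hop_of_find?_eq_none (by simp [h])

end Hopping

theorem hop_pos_neg_coincide_general (n : ℕ) (j : ℕ) (w : Perm ℤ) (hw : IsSignedPerm n w) :
    hop n (j : ℤ) [(j : ℤ) + 1] w = hop n (-(j : ℤ) - 1) [-(j : ℤ)] w := by
  rw [show -(j : ℤ) - 1 = -((j : ℤ) + 1) by ring, hop_singleton, hop_singleton]
  simp only [hopStep_neg_neg_iff hw]
  split_ifs with h
  · rw [hswap_neg_neg h.inPM_left.1 h.1.1]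
  · rfl

/-- for `1 ≤ j ≤ n-1`, the hopping operators `h_{j,[j+1]}` and
`h_{-(j+1),[-j]}` coincide on every signed permutation. -/
theorem hop_pos_neg_coincide (n : ℕ) (hn : 2 ≤ n) (j : ℕ) (hj : 1 ≤ j) (hj' : j ≤ n - 1)
    (w : Perm ℤ) (hw : IsSignedPerm n w) :
    hop n (j : ℤ) [(j : ℤ) + 1] w = hop n (-(j : ℤ) - 1) [-(j : ℤ)] w :=
  hop_pos_neg_coincide_general n j w hw
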